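/- arXiv:1608.05881 — 3 statements merged into one kernel-verified Lean document; each statement's English description precedes it below -/
import Mathlib

section
/- Let X = {1,...,d}^ℕ with shift σ and metric d_θ, θ ∈ (0,1). Let R_+ : X → [0,∞) be Lipschitz with constant c, write R_+^n for the Birkhoff sum and R_+^∞(x) = lim_n R_+^n(x) ∈ [0,+∞]. Suppose ỹ ∈ X satisfies I(ỹ) = 0, where I is lower semi-continuous with I = R_+ + I∘σ. Then for every x ∈ X, I(x) ≤ R_+^∞(x) + cθ/(1-θ). In particular, if R_+^∞(x) < +∞ then I(x) < +∞. -/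
open Filter Topology

/-- The left shift map on the full shift `{1,...,d}^ℕ`. -/
def shift {d : ℕ} (x : ℕ → Fin d) : ℕ → Fin d := fun i => x (i + 1)

/-- The Birkhoff sum `R^n(x) = Σ_{j=0}^{n-1} R(σ^j x)`. -/
def birk {d : ℕ} (R : (ℕ → Fin d) → ℝ) (n : ℕ) (x : ℕ → Fin d) : ℝ :=
  ∑ j ∈ Finset.range n, R (shift^[j] x)

lemma shift_iter {d : ℕ} (n : ℕ) (y : ℕ → Fin d) (i : ℕ) :
    (shift^[n] y) i = y (i + n) := by
  induction n generalizing y i with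
  | zero => rfl
  | succ n ih =>
    rw [Function.iterate_succ_apply, ih]
    simp [shift, Nat.add_assoc]

lemma cocycle_iter {d : ℕ} (R : (ℕ → Fin d) → ℝ) (I : (ℕ → Fin d) → EReal)
    (hcoc : ∀ x, I x = ((R x : ℝ) : EReal) + I (shift x)) (n : ℕ) (y : ℕ → Fin d) :
    I y = ((birk R n y : ℝ) : EReal) + I (shift^[n] y) := by
  induction n with
  | zero => simp [birk]
  | succ n ih =>
    have hb : birk R (n+1) y = birk R n y + R (shift^[n] y) := Finset.sum_range_succ _ _
    rw [ih, hcoc (shift^[n] y), Function.iterate_succ_apply' shift n y, hb, EReal.coe_add,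
      add_assoc]

theorem stmt9 (d : ℕ) (hd : 1 ≤ d) (θ c : ℝ) (hθ : θ ∈ Set.Ioo (0 : ℝ) 1) (hc : 0 ≤ c)
    (R : (ℕ → Fin d) → ℝ)
    (hRnn : ∀ x, 0 ≤ R x)
    (hRlip : ∀ (x y : ℕ → Fin d) (n : ℕ), (∀ i < n, x i = y i) → |R x - R y| ≤ c * θ ^ n)
    (I : (ℕ → Fin d) → EReal)
    (hlsc : LowerSemicontinuous I)
    (hnn : ∀ x, 0 ≤ I x)
    (hcoc : ∀ x, I x = ((R x : ℝ) : EReal) + I (shift x))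
    (ytil : ℕ → Fin d) (hy : I ytil = 0) :
    (∀ x : ℕ → Fin d,
      I x ≤ (⨆ n, ((birk R n x : ℝ) : EReal)) + ((c * θ / (1 - θ) : ℝ) : EReal)) ∧
    (∀ x : ℕ → Fin d, (⨆ n, ((birk R n x : ℝ) : EReal)) < ⊤ → I x < ⊤) := by
  obtain ⟨hθ0, hθ1⟩ := hθ
  have h1θ : (0:ℝ) < 1 - θ := by linarith
  have main : ∀ x : ℕ → Fin d,
      I x ≤ (⨆ n, ((birk R n x : ℝ) : EReal)) + ((c * θ / (1 - θ) : ℝ) : EReal) := by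
    intro x
    set S : EReal := ⨆ n, ((birk R n x : ℝ) : EReal) with hS
    set Cr : ℝ := c * θ / (1 - θ) with hCr
    -- approximating sequence
    set z : ℕ → ℕ → Fin d := fun n i => if i < n then x i else ytil (i - n) with hz
    -- shift^[n] (z n) = ytil
    have hzshift : ∀ n, shift^[n] (z n) = ytil := by
      intro n
      funext i
      rw [shift_iter]
      simp [hz, Nat.add_sub_cancel]
    -- value of I on z n
    have hIz : ∀ n, I (z n) = ((birk R n (z n) : ℝ) : EReal) := by
      intro n
      rw [cocycle_iter R I hcoc n (z n), hzshift n, hy, add_zero]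
    -- birkhoff sum estimate
    have hbirk : ∀ n, birk R n (z n) ≤ birk R n x + Cr := by
      intro n
      have hterm : ∀ j ∈ Finset.range n,
          R (shift^[j] (z n)) ≤ R (shift^[j] x) + c * θ ^ (n - j) := by
        intro j hj
        rw [Finset.mem_range] at hj
        have hagree : ∀ i < n - j, (shift^[j] (z n)) i = (shift^[j] x) i := by
          intro i hi
          rw [shift_iter, shift_iter]
          have : i + j < n := by omega
          simp [hz, this]
        have := hRlip (shift^[j] (z n)) (shift^[j] x) (n - j) hagree
        have := abs_le.mp this
        linarith [this.2]
      have hsum : birk R n (z n) ≤ birk R n x + ∑ j ∈ Finset.range n, c * θ ^ (n - j) := by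
        unfold birk
        rw [← Finset.sum_add_distrib]
        exact Finset.sum_le_sum hterm
      have hgeom : ∑ j ∈ Finset.range n, c * θ ^ (n - j) ≤ Cr := by
        rw [← Finset.mul_sum]
        have hre : ∑ j ∈ Finset.range n, θ ^ (n - j) = ∑ j ∈ Finset.range n, θ ^ (j + 1) := by
          rw [← Finset.sum_range_reflect (fun j => θ ^ (j + 1)) n]
          apply Finset.sum_congr rfl
          intro j hj
          rw [Finset.mem_range] at hj
          congr 1
          omega
        rw [hre]
        have : ∑ j ∈ Finset.range n, θ ^ (j + 1) = θ * ∑ j ∈ Finset.range n, θ ^ j := by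
          rw [Finset.mul_sum]
          apply Finset.sum_congr rfl
          intro j _
          ring
        rw [this]
        have hg : ∑ j ∈ Finset.range n, θ ^ j ≤ 1 / (1 - θ) := by
          rw [geom_sum_eq hθ1.ne]
          have heq : (θ ^ n - 1) / (θ - 1) = (1 - θ ^ n) / (1 - θ) := by
            rw [div_eq_div_iff (by linarith) h1θ.ne']
            ring
          rw [heq]
          have h1 : 1 - θ ^ n ≤ 1 := by nlinarith [pow_nonneg hθ0.le n]
          exact div_le_div₀ zero_le_one h1 h1θ le_rfl
        calc c * (θ * ∑ j ∈ Finset.range n, θ ^ j) ≤ c * (θ * (1 / (1 - θ))) := by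
              gcongr
          _ = Cr := by rw [hCr]; ring
      linarith
    -- I (z n) ≤ S + Cr
    have hkey : ∀ n, I (z n) ≤ S + (Cr : EReal) := by
      intro n
      rw [hIz n]
      calc ((birk R n (z n) : ℝ) : EReal) ≤ ((birk R n x + Cr : ℝ) : EReal) := by
            exact_mod_cast hbirk n
        _ = ((birk R n x : ℝ) : EReal) + (Cr : EReal) := by rw [EReal.coe_add]
        _ ≤ S + (Cr : EReal) := by
            gcongr
            exact le_iSup (fun n => ((birk R n x : ℝ) : EReal)) n
    -- z n → x
    have htend : Tendsto z atTop (𝓝 x) := by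
      rw [tendsto_pi_nhds]
      intro i
      have hev : ∀ᶠ n in atTop, z n i = x i := by
        filter_upwards [eventually_ge_atTop (i + 1)] with n hn
        simp [hz, show i < n by omega]
      exact Tendsto.congr' (hev.mono fun n h => h.symm) tendsto_const_nhds
    -- lower semicontinuity
    apply le_of_forall_lt_imp_le_of_dense
    intro b hb
    have hev : ∀ᶠ n in atTop, b < I (z n) := htend.eventually (hlsc x b hb)
    obtain ⟨n, hn⟩ := hev.exists
    exact le_trans hn.le (hkey n)
  refine ⟨main, fun x hx => ?_⟩
  refine lt_of_le_of_lt (main x) ?_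
  exact EReal.add_lt_top hx.ne (EReal.coe_ne_top _)
end

section
/- Let P : (0,∞) → ℝ with lim_{β→∞} P(β)/β = A > 0, and let (a_j)_{j≥2} be a sequence of negative reals with S := Σ_{j≥2} a_j > -∞. Then lim_{β→∞} (1/β) log ( 1 + Σ_{j=1}^∞ e^{β(a_2 + ... + a_{1+j}) - j P(β)} ) = max{ 0, S - A }. -/
open Filter Topology

set_option maxHeartbeats 1000000 in
theorem stmt14 (P : ℝ → ℝ) (A : ℝ) (hA : 0 < A)
    (hP : Tendsto (fun β : ℝ => P β / β) atTop (nhds A))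
    (a : ℕ → ℝ) (ha : ∀ j, 2 ≤ j → a j < 0)
    (hsum : Summable fun i : ℕ => a (i + 2))
    (S : ℝ) (hS : S = ∑' i : ℕ, a (i + 2)) :
    -- `a_2 + ... + a_{1+j}` for `j ≥ 1` is written as `∑ i ∈ Icc 2 (2+j'), a i` with `j = j'+1`
    Tendsto (fun β : ℝ =>
        (1 / β) * Real.log (1 + ∑' j : ℕ,
          Real.exp (β * (∑ i ∈ Finset.Icc 2 (2 + j), a i) - ((j : ℝ) + 1) * P β)))
      atTop (nhds (max 0 (S - A))) := by
  have ha' : ∀ i : ℕ, a (i + 2) < 0 := fun i => ha _ (by omega)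
  have hicc : ∀ j : ℕ, (∑ i ∈ Finset.Icc 2 (2 + j), a i)
      = ∑ i ∈ Finset.range (j + 1), a (i + 2) := by
    intro j
    induction j with
    | zero => simp
    | succ n ih =>
      rw [show 2 + (n + 1) = (2 + n) + 1 by omega,
        Finset.sum_Icc_succ_top (by omega), ih]
      conv_rhs => rw [Finset.sum_range_succ]
      rw [show 2 + n + 1 = n + 1 + 2 from by omega]
  simp only [hicc]
  set c : ℕ → ℝ := fun j => ∑ i ∈ Finset.range (j + 1), a (i + 2) with hcdef
  set f : ℝ → ℝ := fun β => (1 / β) * Real.log (1 + ∑' j : ℕ,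
      Real.exp (β * c j - ((j : ℝ) + 1) * P β)) with hfdef
  -- basic facts about c
  have hc_neg : ∀ j, c j < 0 := fun j =>
    Finset.sum_neg (fun i _ => ha' i) ⟨0, Finset.mem_range.mpr (by omega)⟩
  have hc_anti : ∀ j k : ℕ, j ≤ k → c k ≤ c j := by
    have h1 : ∀ j : ℕ, c (j + 1) ≤ c j := by
      intro j
      have h2 : c (j + 1) = c j + a (j + 1 + 2) := Finset.sum_range_succ _ _
      have h3 := ha' (j + 1)
      linarith
    exact fun j k h => antitone_nat_of_succ_le h1 h
  have hS_le : ∀ j, S ≤ c j := by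
    intro j
    have h1 := Summable.sum_add_tsum_nat_add (f := fun i => a (i + 2)) (j + 1) hsum
    have h2 : (∑' i : ℕ, a (i + (j + 1) + 2)) ≤ 0 := tsum_nonpos fun i => (ha' _).le
    have h3 : S = c j + ∑' i : ℕ, a (i + (j + 1) + 2) := by rw [hS, ← h1]
    linarith
  have hc_lim : Tendsto c atTop (nhds S) := by
    rw [hS]
    exact hsum.hasSum.tendsto_sum_nat.comp (tendsto_add_atTop_nat 1)
  -- P tends to infinity
  have hPtop : Tendsto P atTop atTop := by
    refine (Filter.Tendsto.pos_mul_atTop hA hP tendsto_id).congr' ?_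
    filter_upwards [eventually_gt_atTop (0 : ℝ)] with β hβ
    field_simp
    rfl
  -- summability
  have hsummable : ∀ β : ℝ, 0 < β → 0 < P β →
      Summable fun j : ℕ => Real.exp (β * c j - ((j : ℝ) + 1) * P β) := by
    intro β hβ hPβ
    have hr1 : Real.exp (-P β) < 1 := Real.exp_lt_one_iff.mpr (by linarith)
    have hgeo : Summable fun j : ℕ => Real.exp (-P β) * Real.exp (-P β) ^ j :=
      (summable_geometric_of_lt_one (Real.exp_nonneg _) hr1).mul_left _
    refine hgeo.of_nonneg_of_le (fun j => (Real.exp_pos _).le) fun j => ?_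
    have he : Real.exp (-P β) * Real.exp (-P β) ^ j
        = Real.exp (-((j : ℝ) + 1) * P β) := by
      rw [show Real.exp (-P β) * Real.exp (-P β) ^ j = Real.exp (-P β) ^ (j + 1) by ring,
        ← Real.exp_nat_mul]
      congr 1
      push_cast
      ring
    rw [he]
    apply Real.exp_le_exp.mpr
    have h1 : β * c j ≤ 0 := (mul_neg_of_pos_of_neg hβ (hc_neg j)).le
    linarith
  -- lower bound
  have hlow : ∀ᶠ β in atTop, max 0 (S - P β / β) ≤ f β := by
    filter_upwards [eventually_gt_atTop (0 : ℝ), hPtop.eventually_gt_atTop 0] with β hβ hPβ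
    have hsble := hsummable β hβ hPβ
    set ts := ∑' j : ℕ, Real.exp (β * c j - ((j : ℝ) + 1) * P β) with hts
    have hts_nonneg : 0 ≤ ts := tsum_nonneg fun j => (Real.exp_pos _).le
    have h0 : 0 ≤ f β := mul_nonneg (by positivity) (Real.log_nonneg (by linarith))
    have h2 : Real.exp (β * c 0 - ((0 : ℕ) + 1 : ℝ) * P β) ≤ ts :=
      Summable.le_tsum hsble 0 fun j _ => (Real.exp_pos _).le
    have h3 : Real.exp (β * S - P β) ≤ Real.exp (β * c 0 - ((0 : ℕ) + 1 : ℝ) * P β) := by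
      apply Real.exp_le_exp.mpr
      have := hS_le 0
      push_cast
      nlinarith
    have h4 : β * S - P β ≤ Real.log (1 + ts) := by
      have h5 := Real.log_le_log (Real.exp_pos _) (by linarith : Real.exp (β * S - P β) ≤ 1 + ts)
      rwa [Real.log_exp] at h5
    have h6 : (1 / β) * (β * S - P β) ≤ f β :=
      mul_le_mul_of_nonneg_left h4 (by positivity)
    have h7 : (1 / β) * (β * S - P β) = S - P β / β := by field_simp
    exact max_le h0 (by linarith)
  rw [tendsto_order]
  constructor
  · intro b hb
    have hg : Tendsto (fun β => max 0 (S - P β / β)) atTop (nhds (max 0 (S - A))) :=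
      tendsto_const_nhds.max (tendsto_const_nhds.sub hP)
    filter_upwards [hlow, hg.eventually (eventually_gt_nhds hb)] with β h1 h2
    exact lt_of_lt_of_le h2 h1
  · intro b hb
    set L := max 0 (S - A) with hL
    set ε := (b - L) / 2 with hε
    have hε0 : 0 < ε := by simp only [hε]; linarith
    obtain ⟨j₀, hj₀⟩ :=
      (hc_lim.eventually (eventually_lt_nhds (show S < S + ε by linarith))).exists
    -- upper bound
    have hup : ∀ᶠ β in atTop,
        f β ≤ Real.log (3 + (j₀ : ℝ)) / β + max 0 (S + ε - P β / β) := by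
      filter_upwards [eventually_gt_atTop (0 : ℝ),
        hPtop.eventually_gt_atTop (Real.log 2)] with β hβ hPl
      have hlog2 : 0 < Real.log 2 := Real.log_pos (by norm_num)
      have hPβ : 0 < P β := lt_trans hlog2 hPl
      set r := Real.exp (-P β) with hr
      have hr0 : 0 < r := Real.exp_pos _
      have hr1 : r < 1 := Real.exp_lt_one_iff.mpr (by linarith)
      have hrhalf : r ≤ 1 / 2 := by
        have h1 : Real.exp (-P β) ≤ Real.exp (-Real.log 2) :=
          Real.exp_le_exp.mpr (by linarith)
        have h2 : Real.exp (-Real.log 2) = 1 / 2 := by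
          rw [Real.exp_neg, Real.exp_log (by norm_num)]
          norm_num
        rw [hr]; linarith
      set T : ℕ → ℝ := fun j => Real.exp (β * c j - ((j : ℝ) + 1) * P β) with hT
      have hsble : Summable T := hsummable β hβ hPβ
      have hsplit := (Summable.sum_add_tsum_nat_add (f := T) j₀ hsble).symm
      have hts_nonneg : 0 ≤ ∑' j : ℕ, T j := tsum_nonneg fun j => (Real.exp_pos _).le
      -- finite part
      have hfin : (∑ j ∈ Finset.range j₀, T j) ≤ (j₀ : ℝ) * r := by
        have h := Finset.sum_le_card_nsmul (Finset.range j₀) T r ?_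
        · rw [Finset.card_range, nsmul_eq_mul] at h
          exact h
        · intro j _
          simp only [hT, hr]
          apply Real.exp_le_exp.mpr
          have h1 : β * c j ≤ 0 := (mul_neg_of_pos_of_neg hβ (hc_neg j)).le
          have h2 : P β ≤ ((j : ℝ) + 1) * P β := by
            nlinarith [Nat.cast_nonneg (α := ℝ) j]
          linarith
      -- tail part
      set Y := Real.exp (β * (S + ε) - P β) with hY
      have hY0 : 0 < Y := Real.exp_pos _
      have htail_le : ∀ j : ℕ, T (j + j₀) ≤ Real.exp (β * (S + ε)) * (r * r ^ j) := by
        intro j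
        have h1 : c (j + j₀) ≤ S + ε := le_trans (hc_anti j₀ (j + j₀) (by omega)) hj₀.le
        have h2 : β * c (j + j₀) ≤ β * (S + ε) := by nlinarith
        have h3 : ((j : ℝ) + 1) * P β ≤ (((j + j₀ : ℕ) : ℝ) + 1) * P β := by
          have h4 : ((j : ℝ) + 1) ≤ ((j + j₀ : ℕ) : ℝ) + 1 := by
            push_cast; linarith [Nat.cast_nonneg (α := ℝ) j₀]
          nlinarith
        have h5 : Real.exp (β * (S + ε)) * (r * r ^ j)
            = Real.exp (β * (S + ε) - ((j : ℝ) + 1) * P β) := by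
          rw [Real.exp_sub, hr,
            show Real.exp (-P β) * Real.exp (-P β) ^ j = Real.exp (-P β) ^ (j + 1) by ring,
            ← Real.exp_nat_mul]
          rw [show ((j + 1 : ℕ) : ℝ) * (-P β) = -(((j : ℝ) + 1) * P β) by push_cast; ring]
          rw [Real.exp_neg]
          field_simp
        rw [h5]
        apply Real.exp_le_exp.mpr
        linarith
      have hsum1 : Summable fun j : ℕ => T (j + j₀) := (summable_nat_add_iff j₀).mpr hsble
      have hsum2 : Summable fun j : ℕ => Real.exp (β * (S + ε)) * (r * r ^ j) :=
        ((summable_geometric_of_lt_one hr0.le hr1).mul_left _).mul_left _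
      have htail : (∑' j : ℕ, T (j + j₀)) ≤ Real.exp (β * (S + ε)) * (r * (1 - r)⁻¹) := by
        have h6 := Summable.tsum_le_tsum htail_le hsum1 hsum2
        rwa [tsum_mul_left, tsum_mul_left, tsum_geometric_of_lt_one hr0.le hr1] at h6
      have hinv : (1 - r)⁻¹ ≤ 2 := by
        have h7 : (1 : ℝ) / 2 ≤ 1 - r := by linarith
        have h8 := inv_anti₀ (by norm_num : (0 : ℝ) < 1 / 2) h7
        norm_num at h8
        linarith
      have htail2 : (∑' j : ℕ, T (j + j₀)) ≤ 2 * Y := by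
        have h9 : Real.exp (β * (S + ε)) * r = Y := by
          rw [hY, hr, ← Real.exp_add]; ring_nf
        nlinarith [Real.exp_pos (β * (S + ε))]
      -- combine
      set M := max 1 Y with hM
      have hM1 : (1 : ℝ) ≤ M := le_max_left _ _
      have hYM : Y ≤ M := le_max_right _ _
      have hub : 1 + (∑' j : ℕ, T j) ≤ (3 + (j₀ : ℝ) * r) * M := by
        have h11 : (j₀ : ℝ) * r ≤ (j₀ : ℝ) * r * M :=
          le_mul_of_one_le_right (mul_nonneg (Nat.cast_nonneg _) hr0.le) hM1
        have h12 : 1 + (∑' j : ℕ, T j) ≤ 1 + ((j₀ : ℝ) * r + 2 * Y) := by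
          rw [hsplit]
          linarith [hfin, htail2]
        have h2Y : 2 * Y ≤ 2 * M := by linarith
        have h13 : (3 + (j₀ : ℝ) * r) * M = M + (j₀ : ℝ) * r * M + 2 * M := by ring
        linarith
      have hlogM : Real.log M = max 0 (β * (S + ε) - P β) := by
        rcases le_total (β * (S + ε) - P β) 0 with h | h
        · rw [hM, hY, max_eq_left (Real.exp_le_one_iff.mpr h), Real.log_one, max_eq_left h]
        · rw [hM, hY, max_eq_right (by
            rw [show (1:ℝ) = Real.exp 0 by rw [Real.exp_zero]]
            exact Real.exp_le_exp.mpr h), Real.log_exp, max_eq_right h]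
      have hlog1 : Real.log (1 + ∑' j : ℕ, T j) ≤ Real.log ((3 + (j₀ : ℝ) * r) * M) :=
        Real.log_le_log (by linarith) hub
      have hpos3 : (0 : ℝ) < 3 + (j₀ : ℝ) * r := by positivity
      have hlog2' : Real.log ((3 + (j₀ : ℝ) * r) * M)
          = Real.log (3 + (j₀ : ℝ) * r) + Real.log M :=
        Real.log_mul (ne_of_gt hpos3) (by linarith)
      have hlog3 : Real.log (3 + (j₀ : ℝ) * r) ≤ Real.log (3 + (j₀ : ℝ)) := by
        apply Real.log_le_log hpos3
        nlinarith [Nat.cast_nonneg (α := ℝ) j₀]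
      have hkey : f β ≤ (1 / β) * (Real.log (3 + (j₀ : ℝ)) + max 0 (β * (S + ε) - P β)) := by
        show (1 / β) * Real.log (1 + ∑' j : ℕ, T j) ≤ _
        apply mul_le_mul_of_nonneg_left _ (by positivity)
        rw [← hlogM]
        calc Real.log (1 + ∑' j : ℕ, T j) ≤ _ := hlog1
        _ = _ := hlog2'
        _ ≤ _ := by linarith
      have hmax : (1 / β) * max 0 (β * (S + ε) - P β) = max 0 (S + ε - P β / β) := by
        rw [mul_max_of_nonneg _ _ (by positivity : (0:ℝ) ≤ 1 / β), mul_zero]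
        congr 1
        field_simp
      calc f β ≤ _ := hkey
      _ = Real.log (3 + (j₀ : ℝ)) / β + (1 / β) * max 0 (β * (S + ε) - P β) := by ring
      _ = _ := by rw [hmax]
    have hu_t : Tendsto (fun β => Real.log (3 + (j₀ : ℝ)) / β + max 0 (S + ε - P β / β))
        atTop (nhds (0 + max 0 (S + ε - A))) :=
      (tendsto_const_nhds.div_atTop tendsto_id).add
        (tendsto_const_nhds.max (tendsto_const_nhds.sub hP))
    have hlt : 0 + max 0 (S + ε - A) < b := by
      have h1 : (0 : ℝ) ≤ L := le_max_left _ _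
      have h2 : S - A ≤ L := le_max_right _ _
      have h3 : max 0 (S + ε - A) ≤ L + ε := max_le (by linarith) (by linarith)
      simp only [hε] at h3 ⊢
      linarith
    filter_upwards [hup, hu_t.eventually (eventually_lt_nhds hlt)] with β h1 h2
    exact lt_of_le_of_lt h1 h2
end

section
/- Let P : (0,∞) → ℝ with lim_{β→∞} P(β)/β = A > 0, and let (a_j)_{j≥2} be negative reals with S := Σ_{j≥2} a_j > -∞. Then lim_{β→∞} (1/β) log ( 1 + Σ_{j=1}^∞ (j+1) e^{β(a_2 + ... + a_{1+j}) - j P(β)} ) = max{ 0, S - 2A }. -/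
open Filter Topology

theorem stmt15 (P : ℝ → ℝ) (A : ℝ) (hA : 0 < A)
    (hP : Tendsto (fun β : ℝ => P β / β) atTop (nhds A))
    (a : ℕ → ℝ) (ha : ∀ j, 2 ≤ j → a j < 0)
    (hsum : Summable fun i : ℕ => a (i + 2))
    (S : ℝ) (hS : S = ∑' i : ℕ, a (i + 2)) :
    -- the term for `j ≥ 1` has factor `(j+1)`; with `j = j'+1` this is `j'+2`
    Tendsto (fun β : ℝ =>
        (1 / β) * Real.log (1 + ∑' j : ℕ,
          ((j : ℝ) + 2) * Real.exp (β * (∑ i ∈ Finset.Icc 2 (2 + j), a i) - ((j : ℝ) + 1) * P β)))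
      atTop (nhds (max 0 (S - 2 * A))) := by
  have hS0 : S ≤ 0 := by
    rw [hS]
    exact tsum_nonpos (fun i => (ha (i + 2) (by omega)).le)
  have hmax : max 0 (S - 2 * A) = 0 := max_eq_left (by linarith)
  rw [hmax]
  -- summability of the bounding series
  have h12 : ‖(1/2 : ℝ)‖ < 1 := by
    rw [Real.norm_eq_abs, abs_of_pos (by norm_num : (0:ℝ) < 1/2)]; norm_num
  have hpow : Summable (fun j : ℕ => (j : ℝ) ^ 1 * ((1:ℝ)/2) ^ j) :=
    summable_pow_mul_geometric_of_norm_lt_one 1 h12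
  have hgeo : Summable (fun j : ℕ => ((1:ℝ)/2) ^ j) :=
    summable_geometric_of_norm_lt_one h12
  have hC : Summable (fun j : ℕ => ((j : ℝ) + 2) * ((1:ℝ)/2) ^ (j + 1)) := by
    have heq : (fun j : ℕ => ((j : ℝ) + 2) * ((1:ℝ)/2) ^ (j + 1))
        = fun j : ℕ => (1/2) * ((j : ℝ) ^ 1 * ((1:ℝ)/2) ^ j) + ((1:ℝ)/2) ^ j := by
      funext j; ring
    rw [heq]
    exact (hpow.mul_left _).add hgeo
  set C : ℝ := ∑' j : ℕ, ((j : ℝ) + 2) * ((1:ℝ)/2) ^ (j + 1) with hCdef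
  have hCnonneg : 0 ≤ C := tsum_nonneg (fun j => by positivity)
  -- partial sums are nonpositive
  have hB : ∀ (j : ℕ), (∑ i ∈ Finset.Icc 2 (2 + j), a i) ≤ 0 := by
    intro j
    apply Finset.sum_nonpos
    intro i hi
    exact (ha i (Finset.mem_Icc.mp hi).1).le
  -- upper bounding function tends to 0
  have hub : Tendsto (fun β : ℝ => (1 / β) * Real.log (1 + C)) atTop (nhds 0) := by
    have h1 : Tendsto (fun β : ℝ => β⁻¹) atTop (nhds 0) := tendsto_inv_atTop_zero
    have := h1.mul_const (Real.log (1 + C))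
    rw [zero_mul] at this
    exact this.congr (fun β => by rw [one_div])
  -- eventual upper and lower bounds
  have hev1 : ∀ᶠ β : ℝ in atTop, (1 : ℝ) ≤ β := eventually_ge_atTop 1
  have hev2 : ∀ᶠ β : ℝ in atTop, A / 2 < P β / β :=
    hP.eventually (eventually_gt_nhds (by linarith))
  have hev3 : ∀ᶠ β : ℝ in atTop, Real.log 2 ≤ A / 2 * β := by
    have : Tendsto (fun β : ℝ => A / 2 * β) atTop atTop :=
      Tendsto.const_mul_atTop (by linarith) tendsto_id
    exact this.eventually_ge_atTop _
  apply tendsto_of_tendsto_of_tendsto_of_le_of_le' tendsto_const_nhds hub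
  · -- lower bound: eventually 0 ≤ f β
    filter_upwards [hev1] with β hβ
    have hβ0 : (0:ℝ) < β := lt_of_lt_of_le one_pos hβ
    have hT : 0 ≤ ∑' j : ℕ,
        ((j : ℝ) + 2) * Real.exp (β * (∑ i ∈ Finset.Icc 2 (2 + j), a i) - ((j : ℝ) + 1) * P β) :=
      tsum_nonneg (fun j => by positivity)
    apply mul_nonneg (by positivity)
    apply Real.log_nonneg
    linarith
  · -- upper bound
    filter_upwards [hev1, hev2, hev3] with β hβ1 hβ2 hβ3
    have hβ0 : (0:ℝ) < β := lt_of_lt_of_le one_pos hβ1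
    have hPβ : Real.log 2 ≤ P β := by
      have h := (lt_div_iff₀ hβ0).mp hβ2
      linarith
    have hx : Real.exp (-P β) ≤ 1 / 2 := by
      have h2 : Real.exp (-P β) ≤ Real.exp (-Real.log 2) := Real.exp_le_exp.mpr (by linarith)
      rw [Real.exp_neg, Real.exp_neg, Real.exp_log (by norm_num : (0:ℝ) < 2)] at h2
      rw [Real.exp_neg]
      calc (Real.exp (P β))⁻¹ ≤ (2:ℝ)⁻¹ := h2
        _ = 1/2 := by norm_num
    -- termwise bound
    have hterm : ∀ j : ℕ,
        ((j : ℝ) + 2) * Real.exp (β * (∑ i ∈ Finset.Icc 2 (2 + j), a i) - ((j : ℝ) + 1) * P β)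
          ≤ ((j : ℝ) + 2) * ((1:ℝ)/2) ^ (j + 1) := by
      intro j
      apply mul_le_mul_of_nonneg_left _ (by positivity)
      have hsplit : Real.exp (β * (∑ i ∈ Finset.Icc 2 (2 + j), a i) - ((j : ℝ) + 1) * P β)
          = Real.exp (β * (∑ i ∈ Finset.Icc 2 (2 + j), a i)) * Real.exp (-P β) ^ (j + 1) := by
        rw [← Real.exp_nat_mul, ← Real.exp_add]
        congr 1
        push_cast
        ring
      rw [hsplit]
      have h1 : Real.exp (β * (∑ i ∈ Finset.Icc 2 (2 + j), a i)) ≤ 1 := by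
        rw [← Real.exp_zero]
        exact Real.exp_le_exp.mpr (mul_nonpos_of_nonneg_of_nonpos hβ0.le (hB j))
      calc Real.exp (β * (∑ i ∈ Finset.Icc 2 (2 + j), a i)) * Real.exp (-P β) ^ (j + 1)
          ≤ 1 * Real.exp (-P β) ^ (j + 1) :=
            mul_le_mul_of_nonneg_right h1 (by positivity)
        _ = Real.exp (-P β) ^ (j + 1) := one_mul _
        _ ≤ ((1:ℝ)/2) ^ (j + 1) := pow_le_pow_left₀ (Real.exp_nonneg _) hx _
    have hsummable : Summable (fun j : ℕ =>
        ((j : ℝ) + 2) * Real.exp (β * (∑ i ∈ Finset.Icc 2 (2 + j), a i) - ((j : ℝ) + 1) * P β)) :=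
      Summable.of_nonneg_of_le (fun j => by positivity) hterm hC
    have hT : (∑' j : ℕ,
        ((j : ℝ) + 2) * Real.exp (β * (∑ i ∈ Finset.Icc 2 (2 + j), a i) - ((j : ℝ) + 1) * P β)) ≤ C :=
      Summable.tsum_le_tsum hterm hsummable hC
    have hT0 : 0 ≤ ∑' j : ℕ,
        ((j : ℝ) + 2) * Real.exp (β * (∑ i ∈ Finset.Icc 2 (2 + j), a i) - ((j : ℝ) + 1) * P β) :=
      tsum_nonneg (fun j => by positivity)
    apply mul_le_mul_of_nonneg_left _ (by positivity)
    exact Real.log_le_log (by linarith) (by linarith)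
end
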